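/- arXiv:2410.09468 — 3 statements merged into one kernel-verified Lean document; each statement's English description precedes it below -/
import Mathlib

section
/- Let A₀ > 0 and Γ₁ > 0. Let E : ℝ → ℝ be differentiable with E(t) ≥ 0 for all t ≥ 0, and let D₃ : ℝ → ℝ satisfy D₃(t) ≥ 0 for all t ≥ 0. Assume (i) for every t ≥ 0, E′(t) ≤ −D₃(t)·(1 − A₀·√(E(t))), (ii) for every t ≥ 0, Γ₁·E(t) ≤ D₃(t), and (iii) E(0) < A₀⁻². Then for every t ≥ 0, E(t) ≤ E(0)·exp(−Γ₁·(1 − A₀·√(E(0)))·t). In particular the energy decays exponentially in time (conditional nonlinear stability theorem). -/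
/-- Conditional nonlinear stability theorem: exponential decay of the energy.
If `E' t ≤ -D₃ t * (1 - A₀ √(E t))`, `Γ₁ E t ≤ D₃ t` and `E 0 < A₀⁻²`, then
`E t ≤ E 0 * exp (-Γ₁ (1 - A₀ √(E 0)) t)` for all `t ≥ 0`. -/
theorem energy_exponential_decay
    (A₀ Γ₁ : ℝ) (hA₀ : 0 < A₀) (hΓ₁ : 0 < Γ₁)
    (E D₃ : ℝ → ℝ) (hE : Differentiable ℝ E)
    (hEnonneg : ∀ t : ℝ, 0 ≤ t → 0 ≤ E t)
    (hD₃nonneg : ∀ t : ℝ, 0 ≤ t → 0 ≤ D₃ t)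
    (hineq : ∀ t : ℝ, 0 ≤ t →
      deriv E t ≤ -D₃ t * (1 - A₀ * Real.sqrt (E t)))
    (hPoincare : ∀ t : ℝ, 0 ≤ t → Γ₁ * E t ≤ D₃ t)
    (hInit : E 0 < A₀⁻¹ ^ 2) :
    ∀ t : ℝ, 0 ≤ t →
      E t ≤ E 0 * Real.exp (-Γ₁ * (1 - A₀ * Real.sqrt (E 0)) * t) := by
  have hcont : Continuous E := hE.continuous
  have hA₀inv : (0:ℝ) < A₀⁻¹ := inv_pos.mpr hA₀
  -- If E t < A₀⁻¹^2 and t ≥ 0 then deriv E t ≤ 0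
  have key : ∀ t : ℝ, 0 ≤ t → E t < A₀⁻¹ ^ 2 → deriv E t ≤ 0 := by
    intro t ht hlt
    have hsqrt : Real.sqrt (E t) < A₀⁻¹ := (Real.sqrt_lt' hA₀inv).mpr hlt
    have hpos : 0 < 1 - A₀ * Real.sqrt (E t) := by
      have : A₀ * Real.sqrt (E t) < A₀ * A₀⁻¹ := by
        exact mul_lt_mul_of_pos_left hsqrt hA₀
      rw [mul_inv_cancel₀ hA₀.ne'] at this
      linarith
    have := hineq t ht
    have : -D₃ t * (1 - A₀ * Real.sqrt (E t)) ≤ 0 := by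
      have := hD₃nonneg t ht
      nlinarith
    linarith [hineq t ht]
  -- Step 1: E stays below the threshold
  have hbdd : ∀ t : ℝ, 0 ≤ t → E t < A₀⁻¹ ^ 2 := by
    by_contra h
    push_neg at h
    obtain ⟨t₁, ht₁, hEt₁⟩ := h
    set S : Set ℝ := Set.Ici (0:ℝ) ∩ E ⁻¹' Set.Ici (A₀⁻¹ ^ 2) with hS
    have hSne : S.Nonempty := ⟨t₁, ht₁, hEt₁⟩
    have hSclosed : IsClosed S :=
      isClosed_Ici.inter (isClosed_Ici.preimage hcont)
    have hSbdd : BddBelow S := ⟨0, fun x hx => hx.1⟩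
    set T := sInf S with hT
    have hTS : T ∈ S := hSclosed.csInf_mem hSne hSbdd
    have hT0 : 0 ≤ T := hTS.1
    have hET : A₀⁻¹ ^ 2 ≤ E T := hTS.2
    have hTne : T ≠ 0 := by
      intro h0
      rw [h0] at hET
      linarith
    have hTpos : 0 < T := lt_of_le_of_ne hT0 (Ne.symm hTne)
    have hlt : ∀ s : ℝ, 0 ≤ s → s < T → E s < A₀⁻¹ ^ 2 := by
      intro s hs hsT
      by_contra hc
      push_neg at hc
      have : T ≤ s := csInf_le hSbdd ⟨hs, hc⟩
      linarith
    have hanti : AntitoneOn E (Set.Icc 0 T) := by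
      apply antitoneOn_of_deriv_nonpos (convex_Icc 0 T) hcont.continuousOn
        (hE.differentiableOn)
      intro x hx
      rw [interior_Icc] at hx
      exact key x hx.1.le (hlt x hx.1.le hx.2)
    have : E T ≤ E 0 := hanti ⟨le_rfl, hT0⟩ ⟨hT0, le_rfl⟩ hT0
    linarith
  -- Step 2: E is antitone on [0, ∞)
  have hanti : AntitoneOn E (Set.Ici 0) := by
    apply antitoneOn_of_deriv_nonpos (convex_Ici 0) hcont.continuousOn
      (hE.differentiableOn)
    intro x hx
    rw [interior_Ici] at hx
    exact key x hx.le (hbdd x hx.le)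
  have hEle : ∀ t : ℝ, 0 ≤ t → E t ≤ E 0 := fun t ht =>
    hanti Set.self_mem_Ici ht ht
  -- the decay constant
  set c := Γ₁ * (1 - A₀ * Real.sqrt (E 0)) with hc
  have hsqrt0 : Real.sqrt (E 0) < A₀⁻¹ := (Real.sqrt_lt' hA₀inv).mpr hInit
  have hc0 : 0 < 1 - A₀ * Real.sqrt (E 0) := by
    have : A₀ * Real.sqrt (E 0) < A₀ * A₀⁻¹ := mul_lt_mul_of_pos_left hsqrt0 hA₀
    rw [mul_inv_cancel₀ hA₀.ne'] at this
    linarith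
  have hcpos : 0 < c := mul_pos hΓ₁ hc0
  -- differential inequality with linear right-hand side
  have hode : ∀ t : ℝ, 0 ≤ t → deriv E t ≤ -c * E t := by
    intro t ht
    have hEt : 0 ≤ E t := hEnonneg t ht
    have hsle : Real.sqrt (E t) ≤ Real.sqrt (E 0) :=
      Real.sqrt_le_sqrt (hEle t ht)
    have h1 : 1 - A₀ * Real.sqrt (E 0) ≤ 1 - A₀ * Real.sqrt (E t) := by
      nlinarith
    have hD : Γ₁ * E t ≤ D₃ t := hPoincare t ht
    have hΓE : 0 ≤ Γ₁ * E t := mul_nonneg hΓ₁.le hEt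
    have hmul : Γ₁ * E t * (1 - A₀ * Real.sqrt (E 0)) ≤
        D₃ t * (1 - A₀ * Real.sqrt (E t)) :=
      mul_le_mul hD h1 hc0.le (le_trans hΓE hD)
    have := hineq t ht
    have : deriv E t ≤ -(Γ₁ * E t * (1 - A₀ * Real.sqrt (E 0))) := by
      linarith
    calc deriv E t ≤ -(Γ₁ * E t * (1 - A₀ * Real.sqrt (E 0))) := this
      _ = -c * E t := by ring
  -- the auxiliary function g t = E t * exp (c t)
  set g : ℝ → ℝ := fun t => E t * Real.exp (c * t) with hg
  have hgderiv : ∀ t : ℝ, HasDerivAt g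
      (deriv E t * Real.exp (c * t) + E t * (Real.exp (c * t) * c)) t := by
    intro t
    have h1 : HasDerivAt (fun s : ℝ => c * s) c t := by
      simpa using (hasDerivAt_id t).const_mul c
    exact (hE t).hasDerivAt.mul h1.exp
  have hganti : AntitoneOn g (Set.Ici 0) := by
    apply antitoneOn_of_deriv_nonpos (convex_Ici 0)
      (fun t _ => ((hgderiv t).continuousAt).continuousWithinAt)
      (fun t _ => ((hgderiv t).differentiableAt).differentiableWithinAt)
    intro x hx
    rw [interior_Ici] at hx
    rw [(hgderiv x).deriv]
    have hexp : 0 < Real.exp (c * x) := Real.exp_pos _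
    have h1 := hode x hx.le
    nlinarith
  intro t ht
  have : g t ≤ g 0 := hganti (Set.self_mem_Ici) ht ht
  have hg0 : g 0 = E 0 := by simp [hg]
  have hgt : g t = E t * Real.exp (c * t) := rfl
  rw [hg0, hgt] at this
  have hexp : 0 < Real.exp (c * t) := Real.exp_pos _
  have hfinal : E t ≤ E 0 * Real.exp (-(c * t)) := by
    rw [Real.exp_neg, ← div_eq_mul_inv, le_div_iff₀ hexp]
    linarith
  calc E t ≤ E 0 * Real.exp (-(c * t)) := hfinal
    _ = E 0 * Real.exp (-Γ₁ * (1 - A₀ * Real.sqrt (E 0)) * t) := by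
        rw [hc]; ring_nf
end

section
/- Let A₀ > 0. Let E : ℝ → ℝ be differentiable with E(t) ≥ 0 for all t ≥ 0, and let D₃ : ℝ → ℝ satisfy D₃(t) ≥ 0 for all t ≥ 0. Assume that for every t ≥ 0, E′(t) ≤ −D₃(t)·(1 − A₀·√(E(t))), and that E(0) < A₀⁻². Then E(t) ≤ E(0) for all t ≥ 0; in particular A₀·√(E(t)) < 1 for all t ≥ 0. -/
/-- Barrier/invariance step: the restriction on the initial energy datum
`E 0 < A₀⁻²` propagates forward in time: `E t ≤ E 0`, in particular
`A₀ √(E t) < 1`, for all `t ≥ 0`. -/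
theorem energy_barrier
    (A₀ : ℝ) (hA₀ : 0 < A₀)
    (E D₃ : ℝ → ℝ) (hE : Differentiable ℝ E)
    (hEnonneg : ∀ t : ℝ, 0 ≤ t → 0 ≤ E t)
    (hD₃nonneg : ∀ t : ℝ, 0 ≤ t → 0 ≤ D₃ t)
    (hineq : ∀ t : ℝ, 0 ≤ t →
      deriv E t ≤ -D₃ t * (1 - A₀ * Real.sqrt (E t)))
    (hInit : E 0 < A₀⁻¹ ^ 2) :
    ∀ t : ℝ, 0 ≤ t → E t ≤ E 0 ∧ A₀ * Real.sqrt (E t) < 1 := by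
  set c : ℝ := A₀⁻¹ ^ 2 with hc
  -- From E s < c we get A₀ √(E s) < 1
  have hlt1 : ∀ s : ℝ, E s < c → A₀ * Real.sqrt (E s) < 1 := by
    intro s hs
    have h1 : Real.sqrt (E s) < A₀⁻¹ := (Real.sqrt_lt' (inv_pos.2 hA₀)).2 hs
    calc A₀ * Real.sqrt (E s) < A₀ * A₀⁻¹ := by
          exact mul_lt_mul_of_pos_left h1 hA₀
      _ = 1 := mul_inv_cancel₀ (ne_of_gt hA₀)
  have hderiv : ∀ s : ℝ, 0 ≤ s → E s < c → deriv E s ≤ 0 := by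
    intro s hs hsc
    have h2 := hlt1 s hsc
    have h3 := hineq s hs
    have h4 := hD₃nonneg s hs
    nlinarith
  -- Main claim: E t < c for all t ≥ 0
  have hmain : ∀ t : ℝ, 0 ≤ t → E t < c := by
    intro t ht
    by_contra hcon
    push_neg at hcon
    set S : Set ℝ := Set.Icc 0 t ∩ E ⁻¹' Set.Ici c with hS
    have hSne : S.Nonempty := ⟨t, ⟨ht, le_refl t⟩, hcon⟩
    have hSclosed : IsClosed S :=
      isClosed_Icc.inter (isClosed_Ici.preimage hE.continuous)
    have hSbdd : BddBelow S := ⟨0, fun x hx => hx.1.1⟩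
    set t₁ : ℝ := sInf S with ht₁
    have ht₁S : t₁ ∈ S := hSclosed.csInf_mem hSne hSbdd
    have ht₁0 : 0 ≤ t₁ := ht₁S.1.1
    have ht₁c : c ≤ E t₁ := ht₁S.2
    have hbefore : ∀ s : ℝ, 0 ≤ s → s < t₁ → E s < c := by
      intro s hs0 hst
      by_contra hsc
      push_neg at hsc
      have hsS : s ∈ S := ⟨⟨hs0, hst.le.trans ht₁S.1.2⟩, hsc⟩
      exact absurd (csInf_le hSbdd hsS) (not_le.2 hst)
    have hanti : AntitoneOn E (Set.Icc 0 t₁) := by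
      apply antitoneOn_of_deriv_nonpos (convex_Icc 0 t₁) hE.continuous.continuousOn
        (hE.differentiableOn.mono interior_subset)
      intro x hx
      rw [interior_Icc] at hx
      exact hderiv x hx.1.le (hbefore x hx.1.le hx.2)
    have h0mem : (0 : ℝ) ∈ Set.Icc 0 t₁ := ⟨le_refl 0, ht₁0⟩
    have ht₁mem : t₁ ∈ Set.Icc 0 t₁ := ⟨ht₁0, le_refl t₁⟩
    have : E t₁ ≤ E 0 := hanti h0mem ht₁mem ht₁0
    linarith
  intro t ht
  have hle : E t ≤ E 0 := by
    have hanti : AntitoneOn E (Set.Icc 0 t) := by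
      apply antitoneOn_of_deriv_nonpos (convex_Icc 0 t) hE.continuous.continuousOn
        (hE.differentiableOn.mono interior_subset)
      intro x hx
      rw [interior_Icc] at hx
      exact hderiv x hx.1.le (hmain x hx.1.le)
    exact hanti ⟨le_refl 0, ht⟩ ⟨ht, le_refl t⟩ ht
  exact ⟨hle, hlt1 t (hmain t ht)⟩
end

section
/- Let A₀ > 0. Let E : ℝ → ℝ be differentiable with E(t) ≥ 0 for all t ≥ 0, and let D₃ : ℝ → ℝ satisfy D₃(t) ≥ 0 for all t ≥ 0. Assume that for every t ≥ 0, E′(t) ≤ −D₃(t)·(1 − A₀·√(E(t))), and that E(0) < A₀⁻². Then for every t ≥ 0, E′(t) ≤ −D₃(t)·(1 − A₀·√(E(0))). -/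
/-- Intermediate inequality: once the initial-datum restriction propagates,
the differential inequality holds with the frozen initial value `E 0`. -/
theorem energy_frozen_inequality
    (A₀ : ℝ) (hA₀ : 0 < A₀)
    (E D₃ : ℝ → ℝ) (hE : Differentiable ℝ E)
    (hEnonneg : ∀ t : ℝ, 0 ≤ t → 0 ≤ E t)
    (hD₃nonneg : ∀ t : ℝ, 0 ≤ t → 0 ≤ D₃ t)
    (hineq : ∀ t : ℝ, 0 ≤ t →
      deriv E t ≤ -D₃ t * (1 - A₀ * Real.sqrt (E t)))
    (hInit : E 0 < A₀⁻¹ ^ 2) :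
    ∀ t : ℝ, 0 ≤ t →
      deriv E t ≤ -D₃ t * (1 - A₀ * Real.sqrt (E 0)) := by
  have hcont : Continuous E := hE.continuous
  have hderiv : ∀ x : ℝ, 0 ≤ x → E x < A₀⁻¹ ^ 2 → deriv E x ≤ 0 := by
    intro x hx0 hEx
    have h1 : Real.sqrt (E x) < A₀⁻¹ := by
      have := Real.sqrt_lt_sqrt (hEnonneg x hx0) hEx
      rwa [Real.sqrt_sq (by positivity)] at this
    have hsq : A₀ * Real.sqrt (E x) < 1 := by
      have : A₀ * Real.sqrt (E x) < A₀ * A₀⁻¹ := by nlinarith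
      rwa [mul_inv_cancel₀ hA₀.ne'] at this
    have := hineq x hx0
    nlinarith [hD₃nonneg x hx0]
  have key : ∀ t : ℝ, 0 ≤ t → E t < A₀⁻¹ ^ 2 := by
    by_contra h
    push_neg at h
    obtain ⟨t₁, ht₁, hEt₁⟩ := h
    set B : Set ℝ := {t | 0 ≤ t ∧ A₀⁻¹ ^ 2 ≤ E t} with hB
    have hBclosed : IsClosed B := by
      have : B = Set.Ici (0:ℝ) ∩ E ⁻¹' Set.Ici (A₀⁻¹ ^ 2) := by
        ext x; simp [hB, Set.mem_Ici]
      rw [this]; exact isClosed_Ici.inter (isClosed_Ici.preimage hcont)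
    have hBne : B.Nonempty := ⟨t₁, ht₁, hEt₁⟩
    have hBbdd : BddBelow B := ⟨0, fun x hx => hx.1⟩
    set t₀ := sInf B with ht₀
    have ht₀B : t₀ ∈ B := hBclosed.csInf_mem hBne hBbdd
    have ht₀pos : 0 < t₀ := by
      rcases lt_or_eq_of_le ht₀B.1 with h | h
      · exact h
      · exfalso; have := ht₀B.2; rw [← h] at this; linarith
    have hlt : ∀ x : ℝ, 0 ≤ x → x < t₀ → E x < A₀⁻¹ ^ 2 := by
      intro x hx hxt
      by_contra hge
      push_neg at hge
      have : t₀ ≤ x := csInf_le hBbdd ⟨hx, hge⟩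
      linarith
    have hanti : AntitoneOn E (Set.Icc 0 t₀) := by
      apply antitoneOn_of_deriv_nonpos (convex_Icc 0 t₀) hcont.continuousOn
        (hE.differentiableOn)
      intro x hx
      rw [interior_Icc] at hx
      exact hderiv x (le_of_lt hx.1) (hlt x (le_of_lt hx.1) hx.2)
    have : E t₀ ≤ E 0 :=
      hanti ⟨le_refl 0, le_of_lt ht₀pos⟩ ⟨le_of_lt ht₀pos, le_refl t₀⟩
        (le_of_lt ht₀pos)
    linarith [ht₀B.2]
  have hEle : ∀ t : ℝ, 0 ≤ t → E t ≤ E 0 := by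
    intro t ht
    rcases eq_or_lt_of_le ht with h | h
    · rw [← h]
    · have hanti : AntitoneOn E (Set.Icc 0 t) := by
        apply antitoneOn_of_deriv_nonpos (convex_Icc 0 t) hcont.continuousOn
          (hE.differentiableOn)
        intro x hx
        rw [interior_Icc] at hx
        exact hderiv x (le_of_lt hx.1) (key x (le_of_lt hx.1))
      exact hanti ⟨le_refl 0, ht⟩ ⟨ht, le_refl t⟩ ht
  intro t ht
  have h1 := hineq t ht
  have h2 : Real.sqrt (E t) ≤ Real.sqrt (E 0) := Real.sqrt_le_sqrt (hEle t ht)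
  nlinarith [mul_nonneg (mul_nonneg (hD₃nonneg t ht) hA₀.le) (sub_nonneg.mpr h2)]
end
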